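/- arXiv:math/0601155 — 2 statements merged into one kernel-verified Lean document; each statement's English description precedes it below -/
import Mathlib

section
/- In the Hecke algebra $\mathbb{H}$ of type $C_n^{(1)}$ with three parameters $\mathbf{q}_0,\mathbf{q}_1,\mathbf{q}_2$, the operators $\varepsilon(T_i)$ ($1 \le i \le n$) and multiplication operators $e^\lambda$ on the group algebra $\mathcal{A}[X^*(T)]$, defined by $\varepsilon(T_i)e^\lambda = \frac{e^\lambda - e^{s_i\lambda}}{e^{\alpha_i}-1} - \mathbf{q}_2\frac{e^\lambda - e^{s_i\lambda+\alpha_i}}{e^{\alpha_i}-1}$ for $1 \le i < n$ and $\varepsilon(T_n)e^\lambda = \frac{e^\lambda - e^{s_n\lambda}}{e^{\alpha_n}-1} + \mathbf{q}_0\mathbf{q}_1\frac{e^\lambda - e^{s_n\lambda+\alpha_n}}{e^{\alpha_n}-1} - (\mathbf{q}_0+\mathbf{q}_1)e^{\epsilon_n}\frac{e^\lambda - e^{s_n\lambda}}{e^{\alpha_n}-1}$, satisfy the quadratic Hecke relations: $(\varepsilon(T_i)+1)(\varepsilon(T_i)-\mathbf{q}_2)=0$ for $1 \le i < n$ and $(\varepsilon(T_n)+1)(\varepsilon(T_n)+\mathbf{q}_0\mathbf{q}_1)=0$.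 -/
/-!
Let `σ` be the automorphism of `𝒜[X*(T)]` induced by the simple reflection and `A = e^α`.
Both operators have the form `(A - 1)(E + 1)x = f x - A σ(f x)`, with `f = e^{αᵢ} - q₂` for a
short root and `f = e^{αₙ} + q₀q₁ - (q₀ + q₁)e^{εₙ} = (e^{εₙ} - q₀)(e^{εₙ} - q₁)` for the long one.
Applying `σ` and using `A σ(A) = 1` gives `(A - 1) σ((E + 1)x) = (A - 1)(E + 1)x`, so every
`(E + 1)x` is `σ`-invariant because `A - 1` is a non-zero-divisor. On `σ`-invariant elements `E`
is the scalar `c` with `f - A σ(f) = (1 + c)(A - 1)`, namely `c = q₂`, resp. `c = -q₀q₁`.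
Hence `(E - c)(E + 1) = 0`.
-/

namespace StmtSix

/-- The coefficient ring `𝒜 = ℂ[q₀^{±1}, q₁^{±1}, q₂^{±1}]`, realized as the group algebra
of `ℤ³` over `ℂ`. -/
abbrev Apar : Type := AddMonoidAlgebra ℂ (Fin 3 → ℤ)

/-- The parameters `q₀, q₁, q₂ ∈ 𝒜`. -/
noncomputable def q (j : Fin 3) : Apar :=
  AddMonoidAlgebra.single (Pi.single j 1) 1

/-- The group algebra `𝒜[X*(T)]` on the weight lattice `X*(T) = ℤⁿ` of type `Cₙ`. -/
abbrev Lat (n : ℕ) : Type := Fin n → ℤ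

abbrev Mod (n : ℕ) : Type := AddMonoidAlgebra Apar (Lat n)

/-- The basis element `e^λ`. -/
noncomputable def e {n : ℕ} (lam : Lat n) : Mod n := AddMonoidAlgebra.single lam 1

/-- The short simple root `αᵢ = εᵢ - ε_{i+1}` (`1 ≤ i < n`). -/
def alphaS {n : ℕ} (i : Fin n) (h : (i : ℕ) + 1 < n) : Lat n :=
  Pi.single i 1 - Pi.single ⟨i + 1, h⟩ 1

/-- The simple reflection `sᵢ` (`1 ≤ i < n`) acting on the weight lattice. -/
def sS {n : ℕ} (i : Fin n) (h : (i : ℕ) + 1 < n) (lam : Lat n) : Lat n :=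
  fun j => if j = i then lam ⟨i + 1, h⟩ else if j = (⟨i + 1, h⟩ : Fin n) then lam i else lam j

/-- The long simple root `αₙ = 2εₙ`. -/
def alphaL (n : ℕ) (hn : 0 < n) : Lat n := Pi.single ⟨n - 1, by omega⟩ 2

/-- The weight `εₙ`. -/
def epsN (n : ℕ) (hn : 0 < n) : Lat n := Pi.single ⟨n - 1, by omega⟩ 1

/-- The simple reflection `sₙ` acting on the weight lattice. -/
def sL {n : ℕ} (lam : Lat n) : Lat n := fun j => if (j : ℕ) = n - 1 then -lam j else lam j

section DemazureLusztig

variable {R S : Type*} [CommRing R] [CommRing S] [Algebra R S] [NoZeroDivisors S]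
  {σ : S →+* S} {A f : S} {E : Module.End R S}

theorem map_apply_add_self_eq (hσ : ∀ x, σ (σ x) = x) (hA : A * σ A = 1) (hA1 : A ≠ 1)
    (hE : ∀ x, (A - 1) * (E x + x) = f * x - A * σ (f * x)) (x : S) :
    σ (E x + x) = E x + x := by
  have hx := hE x
  have h := congrArg σ hx
  rw [map_mul] at hx
  simp only [map_mul, map_sub, map_one, hσ] at h
  refine mul_left_cancel₀ (sub_ne_zero.2 hA1) ?_
  linear_combination (-A) * h - hx + (σ (E x + x) + f * x) * hA

theorem apply_eq_smul_of_fixed {c : R} (hf : f - A * σ f = (1 + c) • (A - 1)) (hA1 : A ≠ 1)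
    (hE : ∀ x, (A - 1) * (E x + x) = f * x - A * σ (f * x)) {z : S} (hz : σ z = z) :
    E z = c • z := by
  refine mul_left_cancel₀ (sub_ne_zero.2 hA1) ?_
  have h := hE z
  rw [map_mul, hz] at h
  simp only [Algebra.smul_def, map_add, map_one] at hf ⊢
  linear_combination h + z * hf

theorem add_one_mul_sub_smul_one_eq_zero {c : R} (hσ : ∀ x, σ (σ x) = x) (hA : A * σ A = 1)
    (hA1 : A ≠ 1) (hf : f - A * σ f = (1 + c) • (A - 1))
    (hE : ∀ x, (A - 1) * (E x + x) = f * x - A * σ (f * x)) :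
    (E + 1) * (E - c • 1) = 0 := by
  have hcomm : (E + 1) * (E - c • 1) = (E - c • 1) * (E + 1) := by
    simp only [mul_add, add_mul, mul_sub, sub_mul, mul_one, one_mul, mul_smul_comm,
      smul_mul_assoc, smul_add]
    abel
  rw [hcomm]
  ext x
  simpa [sub_eq_zero] using apply_eq_smul_of_fixed hf hA1 hE (map_apply_add_self_eq hσ hA hA1 hE x)

end DemazureLusztig

section WeightAlgebra

variable {n : ℕ}

theorem e_add (x y : Lat n) : e (x + y) = e x * e y := by
  simp [e, AddMonoidAlgebra.single_mul_single]

theorem e_mul_e_neg (x : Lat n) : e x * e (-x) = 1 := by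
  rw [← e_add, add_neg_cancel]
  rfl

theorem e_ne_one {x : Lat n} (hx : x ≠ 0) : e x ≠ 1 :=
  fun h => hx (AddMonoidAlgebra.single_left_injective one_ne_zero h)

noncomputable def reflect (s : Lat n →+ Lat n) : Mod n →ₐ[Apar] Mod n :=
  AddMonoidAlgebra.mapDomainAlgHom Apar Apar s

variable (s : Lat n →+ Lat n)

theorem reflect_e (lam : Lat n) : reflect s (e lam) = e (s lam) := by
  simp [reflect, e]

theorem reflect_reflect (hs : ∀ x, s (s x) = x) (x : Mod n) : reflect s (reflect s x) = x := by
  have h : (reflect s).comp (reflect s) = AlgHom.id Apar (Mod n) := by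
    have hs' : s.comp s = AddMonoidHom.id (Lat n) := AddMonoidHom.ext hs
    rw [reflect, ← AddMonoidAlgebra.mapDomainAlgHom_comp, hs',
      AddMonoidAlgebra.mapDomainAlgHom_id]
  exact congr($h x)

theorem e_mul_reflect_e {α : Lat n} (hα : s α = -α) : e α * reflect s (e α) = 1 := by
  rw [reflect_e, hα, e_mul_e_neg]

theorem mul_apply_add_self_eq_of_e {A f : Mod n} {E : Module.End Apar (Mod n)}
    (h : ∀ lam, (A - 1) * (E (e lam) + e lam) = f * e lam - A * reflect s (f * e lam))
    (x : Mod n) : (A - 1) * (E x + x) = f * x - A * reflect s (f * x) := by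
  have hlin : LinearMap.mulLeft Apar (A - 1) ∘ₗ (E + 1) = LinearMap.mulLeft Apar f -
      LinearMap.mulLeft Apar A ∘ₗ (reflect s).toLinearMap ∘ₗ LinearMap.mulLeft Apar f := by
    refine AddMonoidAlgebra.lhom_ext' fun lam => LinearMap.ext_ring ?_
    simpa [e] using h lam
  simpa using congr($hlin x)

theorem quadratic_relation_of_e (hs : ∀ x, s (s x) = x) {α : Lat n} (hα : s α = -α)
    (hα0 : α ≠ 0) {f : Mod n} {c : Apar} (hf : f - e α * reflect s f = (1 + c) • (e α - 1))
    {E : Module.End Apar (Mod n)}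
    (hE : ∀ lam, (e α - 1) * (E (e lam) + e lam) = f * e lam - e α * reflect s (f * e lam)) :
    (E + 1) * (E - c • 1) = 0 :=
  add_one_mul_sub_smul_one_eq_zero (σ := (reflect s).toRingHom) (reflect_reflect s hs)
    (e_mul_reflect_e s hα) (e_ne_one hα0) hf (mul_apply_add_self_eq_of_e s hE)

end WeightAlgebra

section ShortRoot

variable {n : ℕ} (i : Fin n) (h : (i : ℕ) + 1 < n)

theorem sS_eq_comp_swap (lam : Lat n) : sS i h lam = lam ∘ Equiv.swap i ⟨i + 1, h⟩ := by
  funext j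
  simp only [sS, Function.comp_apply, Equiv.swap_apply_def]
  split_ifs <;> rfl

def sSHom : Lat n →+ Lat n :=
  AddMonoidHom.mk' (sS i h) fun x y => by simp only [sS_eq_comp_swap]; rfl

theorem sS_sS (lam : Lat n) : sS i h (sS i h lam) = lam := by
  rw [sS_eq_comp_swap, sS_eq_comp_swap]
  funext j
  simp

theorem sS_alphaS : sS i h (alphaS i h) = -alphaS i h := by
  have hne : i ≠ ⟨i + 1, h⟩ := by simp [Fin.ext_iff]
  funext j
  simp only [sS, alphaS, Pi.sub_apply, Pi.neg_apply, Pi.single_apply]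
  split_ifs <;> simp_all

theorem alphaS_ne_zero : alphaS i h ≠ 0 := by
  have hne : i ≠ ⟨i + 1, h⟩ := by simp [Fin.ext_iff]
  intro h0
  simpa [alphaS, hne] using congrFun h0 i

noncomputable def shortFactor : Mod n := e (alphaS i h) - q 2 • 1

theorem shortFactor_sub_mul_reflect :
    shortFactor i h - e (alphaS i h) * reflect (sSHom i h) (shortFactor i h) =
      (1 + q 2) • (e (alphaS i h) - 1) := by
  simp only [shortFactor, map_sub, map_smul, map_one, reflect_e, sSHom, AddMonoidHom.mk'_apply,
    sS_alphaS]
  simp only [Algebra.smul_def, map_add, map_one]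
  linear_combination (-1 : Mod n) * e_mul_e_neg (alphaS i h)

theorem mul_apply_e_add_e_of_shortRoot {E : Module.End Apar (Mod n)}
    (hE : ∀ lam : Lat n, (e (alphaS i h) - 1) * E (e lam) =
      ((e lam - e (sS i h lam)) - q 2 • (e lam - e (sS i h lam + alphaS i h))))
    (lam : Lat n) :
    (e (alphaS i h) - 1) * (E (e lam) + e lam) =
      shortFactor i h * e lam - e (alphaS i h) * reflect (sSHom i h) (shortFactor i h * e lam) := by
  simp only [shortFactor, map_mul, map_sub, map_smul, map_one, reflect_e, sSHom,
    AddMonoidHom.mk'_apply, sS_alphaS]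
  have hlam := hE lam
  rw [e_add] at hlam
  simp only [Algebra.smul_def] at hlam ⊢
  linear_combination hlam + e (sS i h lam) * e_mul_e_neg (alphaS i h)

end ShortRoot

section LongRoot

variable {n : ℕ} (hn : 0 < n)

theorem sL_add (x y : Lat n) : sL (x + y) = sL x + sL y := by
  funext j
  simp only [sL, Pi.add_apply]
  split_ifs <;> ring

def sLHom : Lat n →+ Lat n := AddMonoidHom.mk' sL sL_add

theorem sL_sL (lam : Lat n) : sL (sL lam) = lam := by
  funext j
  simp only [sL]
  split_ifs <;> ring

theorem sL_epsN : sL (epsN n hn) = -epsN n hn := by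
  funext j
  simp only [sL, epsN, Pi.neg_apply, Pi.single_apply]
  split_ifs <;> simp_all [Fin.ext_iff]

theorem alphaL_eq_epsN_add_epsN : alphaL n hn = epsN n hn + epsN n hn := by
  rw [alphaL, epsN, ← Pi.single_add]
  rfl

theorem sL_alphaL : sL (alphaL n hn) = -alphaL n hn := by
  rw [alphaL_eq_epsN_add_epsN, sL_add, sL_epsN, neg_add]

theorem alphaL_ne_zero : alphaL n hn ≠ 0 := by
  intro h0
  simpa [alphaL] using congrFun h0 ⟨n - 1, by omega⟩

noncomputable def longFactor : Mod n :=
  e (alphaL n hn) + (q 0 * q 1) • 1 - (q 0 + q 1) • e (epsN n hn)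

theorem longFactor_sub_mul_reflect :
    longFactor hn - e (alphaL n hn) * reflect sLHom (longFactor hn) =
      (1 + -(q 0 * q 1)) • (e (alphaL n hn) - 1) := by
  simp only [longFactor, alphaL_eq_epsN_add_epsN, e_add]
  simp only [map_sub, map_add, map_mul, map_smul, map_one, reflect_e, sLHom,
    AddMonoidHom.mk'_apply, sL_epsN]
  simp only [Algebra.smul_def, ← sub_eq_add_neg, map_sub, map_one]
  linear_combination
    (algebraMap Apar (Mod n) (q 0 + q 1) * e (epsN n hn) - 1 - e (epsN n hn) * e (-epsN n hn)) *
      e_mul_e_neg (epsN n hn)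

theorem mul_apply_e_add_e_of_longRoot {E : Module.End Apar (Mod n)}
    (hE : ∀ lam : Lat n, (e (alphaL n hn) - 1) * E (e lam) =
      ((e lam - e (sL lam)) + (q 0 * q 1) • (e lam - e (sL lam + alphaL n hn))
        - (q 0 + q 1) • (e (epsN n hn) * (e lam - e (sL lam)))))
    (lam : Lat n) :
    (e (alphaL n hn) - 1) * (E (e lam) + e lam) =
      longFactor hn * e lam - e (alphaL n hn) * reflect sLHom (longFactor hn * e lam) := by
  have hlam := hE lam
  simp only [longFactor, alphaL_eq_epsN_add_epsN, e_add] at hlam ⊢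
  simp only [map_sub, map_add, map_mul, map_smul, map_one, reflect_e, sLHom,
    AddMonoidHom.mk'_apply, sL_epsN] at hlam ⊢
  simp only [Algebra.smul_def] at hlam ⊢
  linear_combination hlam + e (sL lam) *
    (e (epsN n hn) * e (-epsN n hn) + 1 - algebraMap Apar (Mod n) (q 0 + q 1) * e (epsN n hn)) *
      e_mul_e_neg (epsN n hn)

end LongRoot

/-- The operators `ε(Tᵢ)` of the basic representation of the Hecke algebra of type
`C_n^{(1)}` with parameters `q₀, q₁, q₂` satisfy the quadratic Hecke relations
`(ε(Tᵢ) + 1)(ε(Tᵢ) - q₂) = 0` for `1 ≤ i < n` and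
`(ε(Tₙ) + 1)(ε(Tₙ) + q₀q₁) = 0`.  (Each operator is characterized by its values on the
basis `e^λ`, the displayed quotients by `e^{αᵢ} - 1` being well-defined since `e^{αᵢ} - 1`
is a non-zero-divisor dividing the numerators.) -/
theorem hecke_quadratic_relations (n : ℕ) (hn : 0 < n) :
    (∀ (i : Fin n) (h : (i : ℕ) + 1 < n) (E : Module.End Apar (Mod n)),
      (∀ lam : Lat n,
        (e (alphaS i h) - 1) * E (e lam) =
          ((e lam - e (sS i h lam)) - q 2 • (e lam - e (sS i h lam + alphaS i h)))) →
      (E + 1) * (E - q 2 • 1) = 0) ∧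
    (∀ E : Module.End Apar (Mod n),
      (∀ lam : Lat n,
        (e (alphaL n hn) - 1) * E (e lam) =
          ((e lam - e (sL lam)) + (q 0 * q 1) • (e lam - e (sL lam + alphaL n hn))
            - (q 0 + q 1) • (e (epsN n hn) * (e lam - e (sL lam))))) →
      (E + 1) * (E + (q 0 * q 1) • 1) = 0) := by
  refine ⟨fun i h E hE => ?_, fun E hE => ?_⟩
  · exact quadratic_relation_of_e (sSHom i h) (sS_sS i h) (sS_alphaS i h) (alphaS_ne_zero i h)
      (shortFactor_sub_mul_reflect i h) (mul_apply_e_add_e_of_shortRoot i h hE)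
  · have h := quadratic_relation_of_e sLHom sL_sL (sL_alphaL hn) (alphaL_ne_zero hn)
      (longFactor_sub_mul_reflect hn) (mul_apply_e_add_e_of_longRoot hn hE)
    convert h using 2
    ext x
    simp

end StmtSix
end

section
/- With $\varepsilon$ as in the basic representation of the Hecke algebra of type $C_n^{(1)}$ on $\mathcal{A}[X^*(T)]$, the Bernstein–Lusztig relation holds: for all $\lambda \in X^*(T)$ and $1 \le i < n$, $\varepsilon(T_i)\circ e^\lambda - e^{s_i\lambda}\circ\varepsilon(T_i) = (1-\mathbf{q}_2)\frac{e^\lambda - e^{s_i\lambda}}{e^{\alpha_i}-1}$ as operators on $\mathcal{A}[X^*(T)]$, where $e^\lambda$ denotes the multiplication operator. -/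
/-!
Since `𝒜[X*(T)]` is a domain and `e^{αᵢ} - 1 ≠ 0`, it suffices to prove the relation after
multiplying by `e^{αᵢ} - 1`. By `𝒜`-linearity the defining formula of `ε(Tᵢ)` holds for every
`w`, with `e^{sᵢλ}` replaced by the image `sᵢ w` of `w` under the algebra automorphism induced by
`sᵢ`; since `sᵢ(e^λ v) = e^{sᵢλ} sᵢ(v)`, both sides then expand to the same expression.
-/

namespace StmtSeven

/-- The coefficient ring `𝒜 = ℂ[q₀^{±1}, q₁^{±1}, q₂^{±1}]`, realized as the group algebra
of `ℤ³` over `ℂ`. -/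
abbrev Apar : Type := AddMonoidAlgebra ℂ (Fin 3 → ℤ)

/-- The parameters `q₀, q₁, q₂ ∈ 𝒜`. -/
noncomputable def q (j : Fin 3) : Apar :=
  AddMonoidAlgebra.single (Pi.single j 1) 1

/-- The weight lattice `X*(T) = ℤⁿ` of type `Cₙ`. -/
abbrev Lat (n : ℕ) : Type := Fin n → ℤ

/-- The group algebra `𝒜[X*(T)]`. -/
abbrev Mod (n : ℕ) : Type := AddMonoidAlgebra Apar (Lat n)

/-- The basis element `e^λ`. -/
noncomputable def e {n : ℕ} (lam : Lat n) : Mod n := AddMonoidAlgebra.single lam 1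

/-- The short simple root `αᵢ = εᵢ - ε_{i+1}` (`1 ≤ i < n`). -/
def alphaS {n : ℕ} (i : Fin n) (h : (i : ℕ) + 1 < n) : Lat n :=
  Pi.single i 1 - Pi.single ⟨i + 1, h⟩ 1

/-- The simple reflection `sᵢ` (`1 ≤ i < n`) acting on the weight lattice. -/
def sS {n : ℕ} (i : Fin n) (h : (i : ℕ) + 1 < n) (lam : Lat n) : Lat n :=
  fun j => if j = i then lam ⟨i + 1, h⟩ else if j = (⟨i + 1, h⟩ : Fin n) then lam i else lam j

open AddMonoidAlgebra

lemma e_add {n : ℕ} (a b : Lat n) : e (a + b) = e a * e b := by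
  simp [e, single_mul_single]

lemma e_sub_one_ne_zero {n : ℕ} {a : Lat n} (ha : a ≠ 0) : e a - 1 ≠ 0 := by
  rw [sub_ne_zero]
  exact (single_left_injective one_ne_zero).ne ha

section SimpleReflection

variable {n : ℕ} (i : Fin n) (h : (i : ℕ) + 1 < n)

lemma alphaS_ne_zero : alphaS i h ≠ 0 := by
  have hne : (⟨(i : ℕ) + 1, h⟩ : Fin n) ≠ i := Fin.ne_of_gt (Nat.lt_succ_self i)
  intro h0
  simpa [alphaS, hne] using congrFun h0 i

def sSHom : Lat n →+ Lat n where
  toFun := sS i h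
  map_zero' := by
    funext j
    simp only [sS, Pi.zero_apply, ite_self]
  map_add' a b := by
    funext j
    simp only [sS, Pi.add_apply]
    split_ifs <;> rfl

noncomputable def sSAlg : Mod n →ₐ[Apar] Mod n :=
  mapDomainAlgHom Apar Apar (sSHom i h)

lemma sSAlg_e (a : Lat n) : sSAlg i h (e a) = e (sS i h a) := by
  simp [sSAlg, e, sSHom]

lemma e_alphaS_sub_one_mul_apply (E : Module.End Apar (Mod n))
    (hE : ∀ lam : Lat n,
      (e (alphaS i h) - 1) * E (e lam) =
        ((e lam - e (sS i h lam)) - q 2 • (e lam - e (sS i h lam + alphaS i h))))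
    (w : Mod n) :
    (e (alphaS i h) - 1) * E w =
      (w - sSAlg i h w) - q 2 • (w - e (alphaS i h) * sSAlg i h w) := by
  suffices LinearMap.mulLeft Apar (e (alphaS i h) - 1) ∘ₗ E =
      (LinearMap.id - (sSAlg i h).toLinearMap) -
        q 2 • (LinearMap.id - LinearMap.mulLeft Apar (e (alphaS i h)) ∘ₗ (sSAlg i h).toLinearMap)
    from LinearMap.congr_fun this w
  refine lhom_ext' fun a => LinearMap.ext_ring ?_
  have he : single a (1 : Apar) = e a := rfl
  simp only [LinearMap.comp_apply, lsingle_apply, he, LinearMap.mulLeft_apply, hE, e_add,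
    LinearMap.sub_apply, LinearMap.smul_apply, LinearMap.id_apply, AlgHom.toLinearMap_apply,
    sSAlg_e, add_comm (sS i h a)]

end SimpleReflection

/-- **Bernstein–Lusztig relation.**  With `ε` the basic representation of the Hecke
algebra of type `C_n^{(1)}` on `𝒜[X*(T)]` — i.e. `ε(Tᵢ)` is the operator `E` characterized
by `(e^{αᵢ} - 1)·E(e^λ) = (e^λ - e^{sᵢλ}) - q₂(e^λ - e^{sᵢλ + αᵢ})` — we have, for all
`λ ∈ X*(T)` and `1 ≤ i < n`,
`ε(Tᵢ) ∘ e^λ - e^{sᵢλ} ∘ ε(Tᵢ) = (1 - q₂)·((e^λ - e^{sᵢλ})/(e^{αᵢ} - 1))`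
as operators on `𝒜[X*(T)]` (here `e^λ` denotes the multiplication operator, and the
quotient `dd = (e^λ - e^{sᵢλ})/(e^{αᵢ} - 1)` is the element characterized by
`(e^{αᵢ} - 1)·dd = e^λ - e^{sᵢλ}`). -/
theorem bernstein_lusztig_relation (n : ℕ)
    (i : Fin n) (h : (i : ℕ) + 1 < n) (E : Module.End Apar (Mod n))
    (hE : ∀ lam : Lat n,
      (e (alphaS i h) - 1) * E (e lam) =
        ((e lam - e (sS i h lam)) - q 2 • (e lam - e (sS i h lam + alphaS i h))))
    (lam : Lat n) (dd : Mod n)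
    (hdd : (e (alphaS i h) - 1) * dd = e lam - e (sS i h lam)) :
    ∀ v : Mod n, E (e lam * v) - e (sS i h lam) * E v = (1 - q 2) • (dd * v) := by
  intro v
  have hddv : (e (alphaS i h) - 1) * dd * v = e lam * v - e (sS i h lam) * v := by
    rw [hdd, sub_mul]
  apply mul_left_cancel₀ (e_sub_one_ne_zero (alphaS_ne_zero i h))
  rw [mul_sub, e_alphaS_sub_one_mul_apply i h E hE, mul_left_comm,
    e_alphaS_sub_one_mul_apply i h E hE, map_mul, sSAlg_e]
  simp only [Algebra.smul_def, map_sub, map_one]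
  linear_combination (algebraMap Apar (Mod n) (q 2) - 1) * hddv

end StmtSeven
end
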